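/- arXiv:2205.03372 — 2 statements merged into one kernel-verified Lean document; each statement's English description precedes it below -/
import Mathlib

section
/- For any user-optimizable cost function τ, any evolving graph G, and any travel T̃ from (src,0) to (dst,t) that is cost-optimal with respect to the user-friendly function τ̃, there exists a travel T from (src,0) to (dst,t) in G with cost_τ(T) = cost_{τ̃}(T̃); consequently T is cost-optimal with respect to τ and the minimum costs under τ and τ̃ coincide. -/
variable {V : Type*}

/-- Validity of a travel in an evolving graph `E`: along the sequence, a change
of node requires equal times and an edge at that time; time changes at a fixed
node are unconstrained. -/
def IsTravel (E : ℕ → V → V → Prop) : List (V × ℕ) → Prop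
  | [] => True
  | [_] => True
  | (u, t) :: (v, s) :: rest =>
      (u ≠ v → t = s ∧ E t u v) ∧ IsTravel E ((v, s) :: rest)

/-- Backward cost of a travel for a cost function `τ : ℤ → ℝ`
(applied to the differences `t_i - t_{i+1}`). -/
def travelCost (τ : ℤ → ℝ) : List (V × ℕ) → ℝ
  | [] => 0
  | [_] => 0
  | (_, t) :: (v, s) :: rest => τ ((t : ℤ) - (s : ℤ)) + travelCost τ ((v, s) :: rest)

/-- `T` is a travel in `E` starting at the (node, time) pair `a` and ending at `b`. -/
def TravelFromTo (E : ℕ → V → V → Prop) (T : List (V × ℕ)) (a b : V × ℕ) : Prop :=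
  IsTravel E T ∧ T.head? = some a ∧ T.getLast? = some b

/-- A travel is simple if no node appears in two non-adjacent positions. -/
def SimpleTravel (T : List (V × ℕ)) : Prop :=
  ∀ i j : Fin T.length, (i : ℕ) + 2 ≤ (j : ℕ) → (T.get i).1 ≠ (T.get j).1

/-- Extension of a cost function `f : ℕ → ℝ` to `ℤ`, zero on nonpositive
arguments. -/
noncomputable def extZ (f : ℕ → ℝ) : ℤ → ℝ := fun z => if 0 < z then f z.toNat else 0

def mkSeg (u : V) : ℕ → List (ℕ × ℕ) → List (V × ℕ) → List (V × ℕ)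
  | s, [], K => (u, s) :: K
  | s, (a, d) :: rest, K => (u, s) :: (u, s - a + d) :: mkSeg u (s - a) rest K

lemma mkSeg_cons (u : V) (s : ℕ) (p : List (ℕ × ℕ)) (K : List (V × ℕ)) :
    ∃ L, mkSeg u s p K = (u, s) :: L := by
  cases p with
  | nil => exact ⟨K, rfl⟩
  | cons q rest => obtain ⟨a, d⟩ := q; exact ⟨_, rfl⟩

lemma mkSeg_head (u : V) (s : ℕ) (p : List (ℕ × ℕ)) (K : List (V × ℕ)) :
    (mkSeg u s p K).head? = some (u, s) := by
  obtain ⟨L, hL⟩ := mkSeg_cons u s p K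
  rw [hL]; rfl

lemma mkSeg_getLast (u : V) (p : List (ℕ × ℕ)) (k : V × ℕ) (K : List (V × ℕ)) :
    ∀ s, (mkSeg u s p (k :: K)).getLast? = (k :: K).getLast? := by
  induction p with
  | nil => intro s; simp [mkSeg, List.getLast?_cons_cons]
  | cons q rest ih =>
    obtain ⟨a, d⟩ := q
    intro s
    obtain ⟨L, hL⟩ := mkSeg_cons u (s - a) rest (k :: K)
    simp only [mkSeg, hL, List.getLast?_cons_cons]
    rw [← hL, ih]

lemma mkSeg_isTravel (E : ℕ → V → V → Prop) (u : V) (p : List (ℕ × ℕ)) (r : ℕ)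
    (K : List (V × ℕ)) (hK : IsTravel E ((u, r) :: K)) :
    ∀ s, IsTravel E (mkSeg u s p ((u, r) :: K)) := by
  induction p with
  | nil => intro s; exact ⟨fun h => absurd rfl h, hK⟩
  | cons q rest ih =>
    obtain ⟨a, d⟩ := q
    intro s
    obtain ⟨L, hL⟩ := mkSeg_cons u (s - a) rest ((u, r) :: K)
    have hM := ih (s - a)
    rw [hL] at hM
    show (u ≠ u → _) ∧ IsTravel E ((u, s - a + d) :: mkSeg u (s - a) rest ((u, r) :: K))
    refine ⟨fun h => absurd rfl h, ?_⟩
    rw [hL]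
    exact ⟨fun h => absurd rfl h, hM⟩

lemma mkSeg_cost (τ : ℕ → ℝ) (u : V) (p : List (ℕ × ℕ))
    (hp : ∀ q ∈ p, 0 < q.1 ∧ q.1 ≤ q.2) (K : List (V × ℕ)) :
    ∀ s, (p.map Prod.fst).sum ≤ s → ∀ r, r = s - (p.map Prod.fst).sum →
      travelCost (extZ τ) (mkSeg u s p ((u, r) :: K)) =
        (p.map fun q => τ q.2).sum + travelCost (extZ τ) ((u, r) :: K) := by
  induction p with
  | nil =>
    intro s _ r hr
    simp only [List.map_nil, List.sum_nil, Nat.sub_zero] at hr ⊢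
    subst hr
    simp [mkSeg, travelCost, extZ]
  | cons q rest ih =>
    obtain ⟨a, d⟩ := q
    intro s hs r hr
    have hq := hp (a, d) List.mem_cons_self
    obtain ⟨ha0, had⟩ := hq
    simp only [List.map_cons, List.sum_cons] at hs hr
    have ha : a ≤ s := le_trans (Nat.le_add_right a _) hs
    have hrest : (rest.map Prod.fst).sum ≤ s - a := by omega
    have hr' : r = (s - a) - (rest.map Prod.fst).sum := by omega
    obtain ⟨L, hL⟩ := mkSeg_cons u (s - a) rest ((u, r) :: K)
    have hih := ih (fun q hq => hp q (List.mem_cons_of_mem _ hq)) (s - a) hrest r hr'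
    rw [hL] at hih
    simp only [mkSeg, hL, travelCost, List.map_cons, List.sum_cons]
    rw [hih]
    have e1 : extZ τ ((s : ℤ) - ((s - a + d : ℕ) : ℤ)) = 0 := by
      have : ((s - a + d : ℕ) : ℤ) = (s : ℤ) - a + d := by
        push_cast [Nat.cast_sub ha]; ring
      rw [this]
      simp only [extZ]
      rw [if_neg]; omega
    have e2 : extZ τ (((s - a + d : ℕ) : ℤ) - ((s - a : ℕ) : ℤ)) = τ d := by
      have h1 : ((s - a + d : ℕ) : ℤ) - ((s - a : ℕ) : ℤ) = (d : ℤ) := by push_cast; ring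
      rw [h1]
      simp only [extZ]
      rw [if_pos (by exact_mod_cast (by omega : (0:ℕ) < d))]
      simp
    rw [e1, e2]; ring

lemma extZ_nonpos (f : ℕ → ℝ) (z : ℤ) (h : z ≤ 0) : extZ f z = 0 := by
  simp only [extZ]; rw [if_neg]; omega

lemma travelCost_mono (f g : ℤ → ℝ) (h : ∀ z, f z ≤ g z) (L : List (V × ℕ)) :
    travelCost f L ≤ travelCost g L := by
  induction L with
  | nil => simp [travelCost]
  | cons p L ih =>
    cases L with
    | nil => simp [travelCost]
    | cons q L' =>
      obtain ⟨u, t⟩ := p; obtain ⟨v, s⟩ := q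
      simp only [travelCost]
      exact add_le_add (h _) ih

lemma build_travel (τ τinc τt : ℕ → ℝ)
    (hinc : ∀ t : ℕ, (∃ j, t ≤ j ∧ τinc t = τ j) ∧ (∀ j, t ≤ j → τinc t ≤ τ j))
    (htt : ∀ t : ℕ, 1 ≤ t →
      (∃ a : List ℕ, (∀ x ∈ a, 0 < x) ∧ a.sum = t ∧ τt t = (a.map τinc).sum) ∧
      (∀ a : List ℕ, (∀ x ∈ a, 0 < x) → a.sum = t → τt t ≤ (a.map τinc).sum))
    (E : ℕ → V → V → Prop) :
    ∀ Tt : List (V × ℕ), IsTravel E Tt → ∀ a b : V × ℕ,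
      Tt.head? = some a → Tt.getLast? = some b →
      ∃ T, (IsTravel E T ∧ T.head? = some a ∧ T.getLast? = some b) ∧
        travelCost (extZ τ) T = travelCost (extZ τt) Tt := by
  intro Tt
  induction Tt with
  | nil => intro _ a b ha; simp at ha
  | cons p L ih =>
    cases L with
    | nil =>
      intro _ a b ha hb
      simp only [List.head?_cons, Option.some_inj] at ha
      simp only [List.getLast?_singleton, Option.some_inj] at hb
      exact ⟨[p], ⟨trivial, by simp [ha], by simp [hb]⟩, rfl⟩
    | cons q L' =>
      obtain ⟨u, t1⟩ := p; obtain ⟨v, t2⟩ := q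
      intro hTr a b ha hb
      obtain ⟨h1, h2⟩ := hTr
      simp only [List.head?_cons, Option.some_inj] at ha
      rw [List.getLast?_cons_cons] at hb
      obtain ⟨T', ⟨hT'tr, hT'h, hT'l⟩, hT'c⟩ := ih h2 (v, t2) b rfl hb
      rcases T' with _ | ⟨p', T''⟩
      · simp at hT'h
      · simp only [List.head?_cons, Option.some_inj] at hT'h
        subst hT'h
        by_cases hle : t1 ≤ t2
        · refine ⟨(u, t1) :: (v, t2) :: T'', ⟨⟨h1, hT'tr⟩, by simp [ha], ?_⟩, ?_⟩
          · rw [List.getLast?_cons_cons]; exact hT'l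
          · simp only [travelCost]
            rw [hT'c, extZ_nonpos τ _ (by omega), extZ_nonpos τt _ (by omega)]
        · have huv : u = v := by
            by_contra hne
            exact hle (le_of_eq (h1 hne).1)
          subst huv
          push_neg at hle
          set m := t1 - t2 with hm
          obtain ⟨A, hApos, hAsum, hAcost⟩ := (htt m (by omega)).1
          have hD : ∀ x : ℕ, x ≤ ((hinc x).1).choose ∧ τinc x = τ ((hinc x).1).choose :=
            fun x => ((hinc x).1).choose_spec
          set D : ℕ → ℕ := fun x => ((hinc x).1).choose with hDdef
          set pairs : List (ℕ × ℕ) := A.map (fun x => (x, D x)) with hpairs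
          have hp : ∀ q ∈ pairs, 0 < q.1 ∧ q.1 ≤ q.2 := by
            intro q hq
            rw [hpairs, List.mem_map] at hq
            obtain ⟨x, hx, rfl⟩ := hq
            exact ⟨hApos x hx, (hD x).1⟩
          have hfst : pairs.map Prod.fst = A := by
            rw [hpairs, List.map_map]
            exact List.map_id A
          have hsum : (pairs.map Prod.fst).sum = m := by rw [hfst, hAsum]
          have hsle : (pairs.map Prod.fst).sum ≤ t1 := by omega
          have hr : t2 = t1 - (pairs.map Prod.fst).sum := by omega
          refine ⟨mkSeg u t1 pairs ((u, t2) :: T''), ⟨?_, ?_, ?_⟩, ?_⟩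
          · exact mkSeg_isTravel E u pairs t2 T'' hT'tr t1
          · rw [mkSeg_head, ha]
          · rw [mkSeg_getLast]; exact hT'l
          · rw [mkSeg_cost τ u pairs hp T'' t1 hsle t2 hr, hT'c]
            simp only [travelCost]
            congr 1
            have hcost : (pairs.map fun q => τ q.2).sum = (A.map τinc).sum := by
              rw [hpairs, List.map_map]
              congr 1
              exact List.map_congr_left (fun x _ => ((hD x).2).symm)
            rw [hcost, ← hAcost]
            have hpos : (0 : ℤ) < (t1 : ℤ) - (t2 : ℤ) := by omega
            simp only [extZ, if_pos hpos]
            congr 1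
            omega

/-- For a user-optimizable `τ` (nonnegative, attaining its minimum on every
`[C, ∞)`), with `τinc (t) = min_{j ≥ t} τ j` and `τ̃` its sub-additive closure
over compositions: from any travel `T̃` from `(src, 0)` to `(dst, t)` that is
cost-optimal with respect to `τ̃`, one obtains a travel `T` with the same
endpoints with `cost_τ T = cost_{τ̃} T̃`; consequently `T` is cost-optimal with
respect to `τ`. -/
theorem optimal_travel_transfer (τ τinc τt : ℕ → ℝ) (hnn : ∀ t, 0 ≤ τ t)
    (hatt : ∀ C : ℕ, 0 < C → ∃ j, C ≤ j ∧ ∀ k, C ≤ k → τ j ≤ τ k)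
    (hinc : ∀ t : ℕ, (∃ j, t ≤ j ∧ τinc t = τ j) ∧ (∀ j, t ≤ j → τinc t ≤ τ j))
    (ht0 : τt 0 = 0)
    (htt : ∀ t : ℕ, 1 ≤ t →
      (∃ a : List ℕ, (∀ x ∈ a, 0 < x) ∧ a.sum = t ∧ τt t = (a.map τinc).sum) ∧
      (∀ a : List ℕ, (∀ x ∈ a, 0 < x) → a.sum = t → τt t ≤ (a.map τinc).sum))
    (E : ℕ → V → V → Prop) (src dst : V) (t : ℕ)
    (Ttilde : List (V × ℕ)) (hTt : TravelFromTo E Ttilde (src, 0) (dst, t))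
    (hopt : ∀ S, TravelFromTo E S (src, 0) (dst, t) →
      travelCost (extZ τt) Ttilde ≤ travelCost (extZ τt) S) :
    ∃ T : List (V × ℕ), TravelFromTo E T (src, 0) (dst, t) ∧
      travelCost (extZ τ) T = travelCost (extZ τt) Ttilde ∧
      (∀ S, TravelFromTo E S (src, 0) (dst, t) →
        travelCost (extZ τ) T ≤ travelCost (extZ τ) S) := by
  obtain ⟨hTtr, hTh, hTl⟩ := hTt
  obtain ⟨T, ⟨h1, h2, h3⟩, hcost⟩ :=
    build_travel τ τinc τt hinc htt E Ttilde hTtr (src, 0) (dst, t) hTh hTl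
  have hmono : ∀ z, extZ τt z ≤ extZ τ z := by
    intro z
    by_cases h : 0 < z
    · simp only [extZ, if_pos h]
      have hn : 1 ≤ z.toNat := by omega
      have hA := (htt z.toNat hn).2 [z.toNat] (by simp; omega) (by simp)
      simp only [List.map_cons, List.map_nil, List.sum_cons, List.sum_nil, add_zero] at hA
      exact hA.trans ((hinc z.toNat).2 z.toNat le_rfl)
    · simp [extZ, if_neg h]
  refine ⟨T, ⟨h1, h2, h3⟩, hcost, ?_⟩
  intro S hS
  calc travelCost (extZ τ) T = travelCost (extZ τt) Ttilde := hcost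
    _ ≤ travelCost (extZ τt) S := hopt S hS
    _ ≤ travelCost (extZ τ) S := travelCost_mono _ _ hmono S
end

section
/- If a travel T from (src,0) to (dst,0) exists in an evolving graph G and the cost function τ is non-decreasing, sub-additive and nonnegative, then there exists a travel of minimum cost from (src,0) to (dst,0) among all such travels, and this minimum is achieved by a simple travel. -/
variable {V : Type*}

section Aux

variable {E : ℕ → V → V → Prop} {τ : ℤ → ℝ}

lemma travelCost_cons_cons (τ : ℤ → ℝ) (a b : V × ℕ) (l : List (V × ℕ)) :
    travelCost τ (a :: b :: l) = τ ((a.2 : ℤ) - (b.2 : ℤ)) + travelCost τ (b :: l) := by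
  obtain ⟨u, t⟩ := a; obtain ⟨v, s⟩ := b; rfl

lemma isTravel_cons_cons (E : ℕ → V → V → Prop) (a b : V × ℕ) (l : List (V × ℕ)) :
    IsTravel E (a :: b :: l) ↔
      (a.1 ≠ b.1 → a.2 = b.2 ∧ E a.2 a.1 b.1) ∧ IsTravel E (b :: l) := by
  obtain ⟨u, t⟩ := a; obtain ⟨v, s⟩ := b; rfl

lemma isTravel_iff_chain' (E : ℕ → V → V → Prop) :
    ∀ l : List (V × ℕ), IsTravel E l ↔
      List.Chain' (fun a b => a.1 ≠ b.1 → a.2 = b.2 ∧ E a.2 a.1 b.1) l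
  | [] => by simp [IsTravel, List.Chain']
  | [a] => by simp [IsTravel, List.Chain']
  | a :: b :: l => by
      rw [isTravel_cons_cons, isTravel_iff_chain' E (b :: l)]
      simp only [List.Chain', List.isChain_cons_cons]

section tau
variable (hzero : ∀ z : ℤ, z ≤ 0 → τ z = 0) (hnn : ∀ z : ℤ, 0 ≤ τ z)
    (hmono : ∀ a b : ℤ, 0 ≤ a → a ≤ b → τ a ≤ τ b)
    (hsub : ∀ a b : ℤ, 0 ≤ a → 0 ≤ b → τ (a + b) ≤ τ a + τ b)

include hzero hnn hmono in
lemma tau_mono' {c d : ℤ} (h : c ≤ d) : τ c ≤ τ d := by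
  rcases le_or_gt c 0 with hc | hc
  · rw [hzero c hc]; exact hnn d
  · exact hmono c d hc.le h

include hzero hnn hmono hsub in
lemma tau_subadd' (a b : ℤ) : τ (a + b) ≤ τ a + τ b := by
  have h1 : τ (a + b) ≤ τ (max a 0 + max b 0) :=
    tau_mono' hzero hnn hmono (add_le_add (le_max_left a 0) (le_max_left b 0))
  have h2 : τ (max a 0 + max b 0) ≤ τ (max a 0) + τ (max b 0) :=
    hsub _ _ (le_max_right a 0) (le_max_right b 0)
  have e : ∀ z : ℤ, τ (max z 0) = τ z := by
    intro z
    rcases le_or_gt z 0 with hz | hz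
    · rw [max_eq_right hz, hzero z hz, hzero 0 le_rfl]
    · rw [max_eq_left hz.le]
  calc τ (a + b) ≤ τ (max a 0) + τ (max b 0) := h1.trans h2
    _ = τ a + τ b := by rw [e, e]

include hnn in
lemma travelCost_nonneg : ∀ l : List (V × ℕ), 0 ≤ travelCost τ l
  | [] => le_refl 0
  | [_] => le_refl 0
  | a :: b :: l => by
      rw [travelCost_cons_cons]
      exact add_nonneg (hnn _) (travelCost_nonneg (b :: l))

include hzero hnn hmono hsub in
lemma travelCost_ge :
    ∀ (l : List (V × ℕ)) (x y : V × ℕ), (x :: l).getLast? = some y →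
      τ ((x.2 : ℤ) - (y.2 : ℤ)) ≤ travelCost τ (x :: l)
  | [], x, y, h => by
      simp only [List.getLast?_singleton, Option.some.injEq] at h
      subst h
      simp [hzero 0 le_rfl, travelCost]
  | z :: l, x, y, h => by
      have h' : (z :: l).getLast? = some y := by
        rwa [List.getLast?_cons_cons] at h
      have IH := travelCost_ge (l) z y h'
      rw [travelCost_cons_cons]
      have : τ ((x.2 : ℤ) - (y.2 : ℤ)) ≤ τ ((x.2 : ℤ) - z.2) + τ ((z.2 : ℤ) - y.2) := by
        have := tau_subadd' hzero hnn hmono hsub ((x.2 : ℤ) - z.2) ((z.2 : ℤ) - y.2)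
        have e : ((x.2 : ℤ) - z.2) + ((z.2 : ℤ) - y.2) = (x.2 : ℤ) - y.2 := by ring
        rwa [e] at this
      exact this.trans (by linarith)

end tau

lemma travelCost_append (τ : ℤ → ℝ) :
    ∀ (A : List (V × ℕ)) (x : V × ℕ) (rest : List (V × ℕ)),
      travelCost τ (A ++ x :: rest) = travelCost τ (A ++ [x]) + travelCost τ (x :: rest)
  | [], x, rest => by simp [travelCost]
  | [a], x, rest => by
      simp only [List.cons_append, List.nil_append, travelCost_cons_cons, travelCost]
      ring
  | a :: a' :: A, x, rest => by
      have IH := travelCost_append τ (a' :: A) x rest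
      simp only [List.cons_append] at IH ⊢
      rw [travelCost_cons_cons, travelCost_cons_cons, IH]
      ring

end Aux

section Aux2
variable {E : ℕ → V → V → Prop} {τ : ℤ → ℝ}

/-- Surgery: removing the middle part between two occurrences of the same node
keeps being a travel. -/
lemma isTravel_shrink {A M B : List (V × ℕ)} {x y : V × ℕ} (hxy : x.1 = y.1)
    (h : IsTravel E (A ++ x :: (M ++ y :: B))) : IsTravel E (A ++ x :: y :: B) := by
  rw [isTravel_iff_chain'] at h ⊢
  have h1 : List.Chain' (fun a b : V × ℕ => a.1 ≠ b.1 → a.2 = b.2 ∧ E a.2 a.1 b.1) (A ++ [x]) :=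
    h.prefix ⟨M ++ y :: B, by simp⟩
  have h2 : List.Chain' (fun a b : V × ℕ => a.1 ≠ b.1 → a.2 = b.2 ∧ E a.2 a.1 b.1) (y :: B) :=
    h.suffix ⟨A ++ x :: M, by simp⟩
  have := List.IsChain.append h1 h2 (by
    intro p hp q hq
    simp only [List.getLast?_concat, Option.mem_def, Option.some.injEq] at hp
    simp only [List.head?_cons, Option.mem_def, Option.some.injEq] at hq
    subst hp; subst hq
    intro hne; exact absurd hxy hne)
  simpa [List.Chain'] using this

lemma travelCost_shrink (hzero : ∀ z : ℤ, z ≤ 0 → τ z = 0) (hnn : ∀ z : ℤ, 0 ≤ τ z)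
    (hmono : ∀ a b : ℤ, 0 ≤ a → a ≤ b → τ a ≤ τ b)
    (hsub : ∀ a b : ℤ, 0 ≤ a → 0 ≤ b → τ (a + b) ≤ τ a + τ b)
    (A M B : List (V × ℕ)) (x y : V × ℕ) :
    travelCost τ (A ++ x :: y :: B) ≤ travelCost τ (A ++ x :: (M ++ y :: B)) := by
  rw [travelCost_append τ A x (M ++ y :: B), travelCost_append τ A x (y :: B)]
  have e1 : x :: (M ++ y :: B) = (x :: M) ++ y :: B := by simp
  rw [e1, travelCost_append τ (x :: M) y B]
  have hlast : ((x :: M) ++ [y]).getLast? = some y := List.getLast?_concat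
  have e2 : (x :: M) ++ [y] = x :: (M ++ [y]) := by simp
  have hge : τ ((x.2 : ℤ) - (y.2 : ℤ)) ≤ travelCost τ ((x :: M) ++ [y]) := by
    rw [e2] at hlast ⊢
    exact travelCost_ge hzero hnn hmono hsub (M ++ [y]) x y hlast
  have hxy : travelCost τ (x :: y :: B) = τ ((x.2 : ℤ) - (y.2 : ℤ)) + travelCost τ (y :: B) :=
    travelCost_cons_cons τ x y B
  linarith

/-- cost is in the additive submonoid generated by the range of τ. -/
lemma travelCost_mem (τ : ℤ → ℝ) :
    ∀ l : List (V × ℕ), travelCost τ l ∈ AddSubmonoid.closure (Set.range τ)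
  | [] => zero_mem _
  | [_] => zero_mem _
  | a :: b :: l => by
      rw [travelCost_cons_cons]
      exact add_mem (AddSubmonoid.subset_closure ⟨_, rfl⟩) (travelCost_mem τ (b :: l))

lemma range_tau_isPWO (hzero : ∀ z : ℤ, z ≤ 0 → τ z = 0) (hnn : ∀ z : ℤ, 0 ≤ τ z)
    (hmono : ∀ a b : ℤ, 0 ≤ a → a ≤ b → τ a ≤ τ b) : (Set.range τ).IsPWO := by
  rw [Set.IsPWO, Set.partiallyWellOrderedOn_iff_exists_lt]
  intro f hf
  have hf' : ∀ n, ∃ k : ℕ, τ (k : ℤ) = f n := by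
    intro n
    obtain ⟨z, hz⟩ := hf n
    refine ⟨z.toNat, ?_⟩
    rcases le_or_gt z 0 with h | h
    · rw [Int.toNat_of_nonpos h]
      rw [hzero z h] at hz
      show τ ((0:ℕ):ℤ) = f n
      rw [show (((0:ℕ):ℤ)) = (0:ℤ) by norm_num, hzero 0 le_rfl]; exact hz
    · rw [Int.toNat_of_nonneg h.le]; exact hz
  choose k hk using hf'
  obtain ⟨m0, hm0⟩ : sInf (Set.range k) ∈ Set.range k := Nat.sInf_mem (Set.range_nonempty k)
  refine ⟨m0, m0 + 1, Nat.lt_succ_self m0, ?_⟩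
  rw [← hk m0, ← hk (m0 + 1)]
  have : k m0 ≤ k (m0 + 1) := hm0 ▸ Nat.sInf_le ⟨m0 + 1, rfl⟩
  exact hmono _ _ (Int.natCast_nonneg _) (by exact_mod_cast this)

lemma costSet_isWF (hzero : ∀ z : ℤ, z ≤ 0 → τ z = 0) (hnn : ∀ z : ℤ, 0 ≤ τ z)
    (hmono : ∀ a b : ℤ, 0 ≤ a → a ≤ b → τ a ≤ τ b) {C : Set ℝ}
    (hC : C ⊆ (AddSubmonoid.closure (Set.range τ) : Set ℝ)) : C.IsWF := by
  have h1 : (AddSubmonoid.closure (Set.range τ) : Set ℝ).IsPWO :=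
    Set.IsPWO.addSubmonoid_closure (fun x ⟨z, hz⟩ => hz ▸ hnn z)
      (range_tau_isPWO hzero hnn hmono)
  exact (h1.isWF).mono hC

end Aux2

section Simplify
variable {E : ℕ → V → V → Prop} {τ : ℤ → ℝ}

lemma simplify_travel (hzero : ∀ z : ℤ, z ≤ 0 → τ z = 0) (hnn : ∀ z : ℤ, 0 ≤ τ z)
    (hmono : ∀ a b : ℤ, 0 ≤ a → a ≤ b → τ a ≤ τ b)
    (hsub : ∀ a b : ℤ, 0 ≤ a → 0 ≤ b → τ (a + b) ≤ τ a + τ b) :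
    ∀ (T : List (V × ℕ)), IsTravel E T →
      ∃ T', IsTravel E T' ∧ T'.head? = T.head? ∧ T'.getLast? = T.getLast? ∧
        SimpleTravel T' ∧ travelCost τ T' ≤ travelCost τ T := by
  have key : ∀ (n : ℕ) (T : List (V × ℕ)), T.length ≤ n → IsTravel E T →
      ∃ T', IsTravel E T' ∧ T'.head? = T.head? ∧ T'.getLast? = T.getLast? ∧
        SimpleTravel T' ∧ travelCost τ T' ≤ travelCost τ T := by
    intro n
    induction n with
    | zero =>
      intro T hlen hT
      have : T = [] := List.length_eq_zero_iff.mp (Nat.le_zero.mp hlen)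
      subst this
      exact ⟨[], trivial, rfl, rfl, fun i => absurd i.isLt (by simp), le_rfl⟩
    | succ n IH =>
      intro T hlen hT
      by_cases hs : SimpleTravel T
      · exact ⟨T, hT, rfl, rfl, hs, le_rfl⟩
      · simp only [SimpleTravel, not_forall] at hs
        obtain ⟨i, j, hij, heq⟩ := hs
        rw [not_ne_iff] at heq
        set A := T.take (i : ℕ) with hA
        set x := T.get i with hx
        set M := (T.take (j : ℕ)).drop ((i : ℕ) + 1) with hM
        set y := T.get j with hy
        set B := T.drop ((j : ℕ) + 1) with hB
        have hjlt : (j : ℕ) < T.length := j.isLt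
        have hilt : (i : ℕ) < T.length := i.isLt
        have hdecomp : T = A ++ x :: (M ++ y :: B) := by
          have e1 : T.drop (j : ℕ) = y :: B := by
            rw [hB, hy, List.get_eq_getElem]
            exact List.drop_eq_getElem_cons hjlt
          have e2 : T.take ((i : ℕ) + 1) = A ++ [x] := by
            rw [hA, hx, List.get_eq_getElem, List.take_concat_get' T (i : ℕ) hilt]
          have e3 : T.take (j : ℕ) = A ++ [x] ++ M := by
            rw [← e2, hM]
            have : (T.take (j : ℕ)).take ((i : ℕ) + 1) = T.take ((i : ℕ) + 1) := by
              rw [List.take_take, Nat.min_eq_left (by omega)]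
            rw [← this, List.take_append_drop]
          calc T = T.take (j : ℕ) ++ T.drop (j : ℕ) := (List.take_append_drop _ T).symm
            _ = (A ++ [x] ++ M) ++ (y :: B) := by rw [e3, e1]
            _ = A ++ x :: (M ++ y :: B) := by simp
        -- the shrunk travel
        have hT' : IsTravel E (A ++ x :: y :: B) :=
          isTravel_shrink heq (hdecomp ▸ hT)
        have hcost' : travelCost τ (A ++ x :: y :: B) ≤ travelCost τ T := by
          conv_rhs => rw [hdecomp]
          exact travelCost_shrink hzero hnn hmono hsub A M B x y
        have hhead : (A ++ x :: y :: B).head? = T.head? := by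
          conv_rhs => rw [hdecomp]
          simp
        have hlast : (A ++ x :: y :: B).getLast? = T.getLast? := by
          conv_rhs => rw [hdecomp]
          rw [show A ++ x :: y :: B = (A ++ [x]) ++ (y :: B) by simp,
            show A ++ x :: (M ++ y :: B) = (A ++ x :: M) ++ (y :: B) by simp,
            List.getLast?_append_of_ne_nil _ (by simp),
            List.getLast?_append_of_ne_nil _ (by simp)]
        have hlen' : (A ++ x :: y :: B).length ≤ n := by
          have hAlen : A.length = (i : ℕ) := by
            rw [hA, List.length_take]; omega
          have hBlen : B.length = T.length - ((j : ℕ) + 1) := by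
            rw [hB, List.length_drop]
          simp only [List.length_append, List.length_cons, hAlen, hBlen]
          omega
        obtain ⟨T'', h1, h2, h3, h4, h5⟩ := IH (A ++ x :: y :: B) hlen' hT'
        exact ⟨T'', h1, h2.trans hhead, h3.trans hlast, h4, h5.trans hcost'⟩
  exact fun T hT => key T.length T le_rfl hT

end Simplify

/-- If some travel from `(src, 0)` to `(dst, 0)` exists and `τ` is
nonnegative, non-decreasing and sub-additive, then there exists a travel of
minimum cost among all travels from `(src, 0)` to `(dst, 0)`, and this minimum
is achieved by a simple travel. -/
theorem exists_min_cost_simple_travel (E : ℕ → V → V → Prop) (τ : ℤ → ℝ)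
    (hzero : ∀ z : ℤ, z ≤ 0 → τ z = 0) (hnn : ∀ z : ℤ, 0 ≤ τ z)
    (hmono : ∀ a b : ℤ, 0 ≤ a → a ≤ b → τ a ≤ τ b)
    (hsub : ∀ a b : ℤ, 0 ≤ a → 0 ≤ b → τ (a + b) ≤ τ a + τ b)
    (src dst : V)
    (T0 : List (V × ℕ)) (hT0 : TravelFromTo E T0 (src, 0) (dst, 0)) :
    ∃ T : List (V × ℕ), TravelFromTo E T (src, 0) (dst, 0) ∧ SimpleTravel T ∧
      ∀ S, TravelFromTo E S (src, 0) (dst, 0) → travelCost τ T ≤ travelCost τ S := by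
  classical
  set C : Set ℝ := {c | ∃ S, TravelFromTo E S (src, 0) (dst, 0) ∧ travelCost τ S = c} with hC
  have hCsub : C ⊆ (AddSubmonoid.closure (Set.range τ) : Set ℝ) := by
    rintro c ⟨S, _, rfl⟩
    exact travelCost_mem τ S
  have hWF : C.IsWF := costSet_isWF hzero hnn hmono hCsub
  have hne : C.Nonempty := ⟨_, T0, hT0, rfl⟩
  obtain ⟨Tm, hTm, hcm⟩ := hWF.min_mem hne
  obtain ⟨T', h1, h2, h3, h4, h5⟩ := simplify_travel hzero hnn hmono hsub Tm hTm.1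
  refine ⟨T', ⟨h1, by rw [h2]; exact hTm.2.1, by rw [h3]; exact hTm.2.2⟩, h4, ?_⟩
  intro S hS
  have hmin : hWF.min hne ≤ travelCost τ S := hWF.min_le hne ⟨S, hS, rfl⟩
  calc travelCost τ T' ≤ travelCost τ Tm := h5
    _ = hWF.min hne := hcm
    _ ≤ travelCost τ S := hmin
end
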